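/- Let f ∈ F_q[x] be a polynomial of degree k with 0 < k < q. If |D_f^{-1} D_f| < q - k + 2, then f is a permutation of F_q. -/

import Mathlib

/-!
If `f a = f b` with `a ≠ b`, then `0` is a direction, and for every `x` with `f x ≠ f b` the
slope from `(x, f x)` to `(a, f a)` divided by the slope to `(b, f b)` is `(x - b) / (x - a)`.
This Möbius transformation is injective and avoids `0` and `1`, both of which also lie in
`D_f⁻¹ D_f`. A polynomial of degree `k` takes the value `f b` at most `k` times, so
`|D_f⁻¹ D_f| ≥ q - k + 2`.
-/

open Pointwise

variable {F : Type*} [Field F] [Fintype F]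

/-- The set of directions determined by the graph of `f`. -/
def dirs (f : F → F) : Set F := {d | ∃ x y : F, x ≠ y ∧ d = (f x - f y) / (x - y)}

/-- The set of inverses of the nonzero elements of `A`. -/
def invSet (A : Set F) : Set F := {b | ∃ a ∈ A, a ≠ 0 ∧ b = a⁻¹}

open Finset Polynomial

theorem Polynomial.card_filter_eval_eq_le_natDegree {R : Type*} [CommRing R] [IsDomain R]
    [Fintype R] [DecidableEq R] {p : R[X]} (hp : 0 < p.degree) (c : R) :
    #{x | p.eval x = c} ≤ p.natDegree :=
  calc #{x | p.eval x = c}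
      = #(p - C c).roots.toFinset := congr_arg card (by ext; simp [← mem_roots_sub_C hp])
    _ ≤ Multiset.card (p - C c).roots := Multiset.toFinset_card_le _
    _ ≤ p.natDegree := card_roots_sub_C' hp

theorem Polynomial.card_sub_natDegree_le_card_filter_eval_ne {R : Type*} [CommRing R] [IsDomain R]
    [Fintype R] [DecidableEq R] {p : R[X]} (hp : 0 < p.degree) (c : R) :
    Fintype.card R - p.natDegree ≤ #{x | p.eval x ≠ c} := by
  have hsplit := card_filter_add_card_filter_not (s := univ) (fun x => p.eval x = c)
  have hfiber := card_filter_eval_eq_le_natDegree hp c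
  rw [card_univ] at hsplit
  simp only [ne_eq]
  omega

section Directions

variable {K : Type*} [Field K] {A : Set K} {f : K → K} {a b x : K}

theorem inv_mul_mem_invSet_mul (ha : a ∈ A) (ha0 : a ≠ 0) (hb : b ∈ A) :
    a⁻¹ * b ∈ invSet A * A :=
  Set.mul_mem_mul ⟨a, ha, ha0, rfl⟩ hb

theorem zero_mem_invSet_mul (h0 : 0 ∈ A) (ha : a ∈ A) (ha0 : a ≠ 0) : 0 ∈ invSet A * A := by
  simpa using inv_mul_mem_invSet_mul ha ha0 h0

theorem one_mem_invSet_mul (ha : a ∈ A) (ha0 : a ≠ 0) : 1 ∈ invSet A * A := by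
  simpa [ha0] using inv_mul_mem_invSet_mul ha ha0 ha

theorem slope_mem_dirs (f : K → K) (h : x ≠ b) : (f x - f b) / (x - b) ∈ dirs f :=
  ⟨x, b, h, rfl⟩

theorem zero_mem_dirs (hab : a ≠ b) (hf : f a = f b) : 0 ∈ dirs f := by
  simpa [hf] using slope_mem_dirs f hab

theorem slope_ne_zero (h : f x ≠ f b) : (f x - f b) / (x - b) ≠ 0 :=
  div_ne_zero (sub_ne_zero.mpr h) (sub_ne_zero.mpr fun hxb => h (hxb ▸ rfl))

theorem sub_div_sub_mem_invSet_dirs_mul_dirs (hf : f a = f b) (hx : f x ≠ f b) :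
    (x - b) / (x - a) ∈ invSet (dirs f) * dirs f := by
  have hxa : x ≠ a := fun h => hx (h ▸ hf)
  have hxb : x ≠ b := fun h => hx (h ▸ rfl)
  convert inv_mul_mem_invSet_mul (slope_mem_dirs f hxb) (slope_ne_zero hx)
    (slope_mem_dirs f hxa) using 1
  rw [hf]
  field_simp [sub_ne_zero.mpr hxa, sub_ne_zero.mpr hxb]

end Directions

section Mobius

variable {K : Type*} [Field K] {a b : K}

theorem sub_div_sub_ne_one (hab : a ≠ b) {x : K} (hxa : x ≠ a) : (x - b) / (x - a) ≠ 1 := by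
  rw [Ne, div_eq_one_iff_eq (sub_ne_zero.mpr hxa), sub_right_inj]
  exact hab.symm

theorem injOn_sub_div_sub (hab : a ≠ b) :
    Set.InjOn (fun x => (x - b) / (x - a)) {x | x ≠ a} := by
  intro x hxa y hya hxy
  rw [div_eq_div_iff (sub_ne_zero.mpr hxa) (sub_ne_zero.mpr hya)] at hxy
  have : (a - b) * (y - x) = 0 := by linear_combination hxy
  simpa [sub_ne_zero.mpr hab, sub_eq_zero, eq_comm] using this

end Mobius

theorem card_filter_ne_add_two_le_ncard [DecidableEq F] (f : F → F) {a b : F} (hab : a ≠ b)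
    (hf : f a = f b) {x₀ : F} (hx₀ : f x₀ ≠ f b) :
    #{x | f x ≠ f b} + 2 ≤ (invSet (dirs f) * dirs f).ncard := by
  set S : Finset F := {x | f x ≠ f b}
  set φ : F → F := fun x => (x - b) / (x - a)
  have hSa : ∀ x ∈ S, x ≠ a := fun x hx h => (mem_filter.mp hx).2 (h ▸ hf)
  have hSb : ∀ x ∈ S, x ≠ b := fun x hx h => (mem_filter.mp hx).2 (h ▸ rfl)
  have h1 : (1 : F) ∉ S.image φ := by
    simp only [mem_image, not_exists, not_and]
    exact fun x hx => sub_div_sub_ne_one hab (hSa x hx)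
  have h0 : (0 : F) ∉ insert 1 (S.image φ) := by
    simp only [mem_insert, zero_ne_one, mem_image, false_or, not_exists, not_and]
    exact fun x hx => div_ne_zero (sub_ne_zero.mpr (hSb x hx)) (sub_ne_zero.mpr (hSa x hx))
  have hcard : #(insert 0 (insert 1 (S.image φ))) = #S + 2 := by
    rw [card_insert_of_notMem h0, card_insert_of_notMem h1,
      card_image_of_injOn ((injOn_sub_div_sub hab).mono hSa)]
  have hsub : (↑(insert 0 (insert 1 (S.image φ))) : Set F) ⊆ invSet (dirs f) * dirs f := by
    have hslope := slope_mem_dirs f (ne_of_apply_ne f hx₀)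
    simp only [coe_insert, coe_image, Set.insert_subset_iff, Set.image_subset_iff]
    exact ⟨zero_mem_invSet_mul (zero_mem_dirs hab hf) hslope (slope_ne_zero hx₀),
      one_mem_invSet_mul hslope (slope_ne_zero hx₀),
      fun x hx => sub_div_sub_mem_invSet_dirs_mul_dirs hf (mem_filter.mp hx).2⟩
  rw [← hcard, ← Set.ncard_coe_finset]
  exact Set.ncard_le_ncard hsub

theorem stmt5 (f : Polynomial F) (k : ℕ) (hk0 : 0 < k) (hkq : k < Fintype.card F)
    (hdeg : f.natDegree = k)
    (hsize : (invSet (dirs f.eval) * dirs f.eval).ncard < Fintype.card F - k + 2) :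
    Function.Bijective f.eval := by
  classical
  refine Finite.injective_iff_bijective.mp fun a b hf => by_contra fun hab => ?_
  have hdeg_pos : 0 < f.degree := natDegree_pos_iff_degree_pos.mp (hdeg ▸ hk0)
  have hmany := card_sub_natDegree_le_card_filter_eval_ne hdeg_pos (f.eval b)
  obtain ⟨x₀, hx₀⟩ := card_pos.mp (show 0 < #{x | f.eval x ≠ f.eval b} by omega)
  have hbound := card_filter_ne_add_two_le_ncard f.eval hab hf (mem_filter.mp hx₀).2
  omega
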